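/- arXiv:2009.08763 — 3 statements merged into one kernel-verified Lean document; each statement's English description precedes it below -/
import Mathlib

section
/- Let R be a ring and (T, F) a torsion pair in Mod(R) with torsion radical t. Then the torsion submodule t(R) of the right regular module R equals the intersection K of the annihilators of all modules in F, as (two-sided) ideals of R. -/
/- Every torsion-free `M` is killed by `t(R)`: for `m : M`, the map `r ↦ r • m` restricted to `t(R)`
goes from a torsion module to a torsion-free one, so it vanishes. Conversely `R ⧸ t(R)` is
torsion-free, and `r` kills the class of `1` there only when `r ∈ t(R)`. -/

universe u

structure TorsionTheory (R : Type u) [Ring R] where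
  torsion : ∀ (M : Type u) [AddCommGroup M] [Module R M], Prop
  free : ∀ (M : Type u) [AddCommGroup M] [Module R M], Prop
  torsion_congr : ∀ {M N : Type u} [AddCommGroup M] [Module R M] [AddCommGroup N]
    [Module R N], (M ≃ₗ[R] N) → torsion M → torsion N
  free_congr : ∀ {M N : Type u} [AddCommGroup M] [Module R M] [AddCommGroup N]
    [Module R N], (M ≃ₗ[R] N) → free M → free N
  hom_eq_zero : ∀ {M N : Type u} [AddCommGroup M] [Module R M] [AddCommGroup N]
    [Module R N] (f : M →ₗ[R] N), torsion M → free N → f = 0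
  rad : ∀ (M : Type u) [AddCommGroup M] [Module R M], Submodule R M
  rad_torsion : ∀ (M : Type u) [AddCommGroup M] [Module R M], torsion (rad M)
  quotient_rad_free : ∀ (M : Type u) [AddCommGroup M] [Module R M], free (M ⧸ rad M)

namespace TorsionTheory

variable {R : Type u} [Ring R] (tt : TorsionTheory R)

theorem smul_eq_zero_of_mem_rad {M : Type u} [AddCommGroup M] [Module R M] (hM : tt.free M)
    {r : R} (hr : r ∈ tt.rad R) (m : M) : r • m = 0 :=
  LinearMap.congr_fun
    (tt.hom_eq_zero ((LinearMap.toSpanSingleton R M m).comp (tt.rad R).subtype)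
      (tt.rad_torsion R) hM) ⟨r, hr⟩

theorem mem_rad_self_iff (r : R) :
    r ∈ tt.rad R ↔
      ∀ (M : Type u) [AddCommGroup M] [Module R M], tt.free M → ∀ m : M, r • m = 0 := by
  refine ⟨fun hr M _ _ hM m => tt.smul_eq_zero_of_mem_rad hM hr m, fun h => ?_⟩
  have hkill := h (R ⧸ tt.rad R) (tt.quotient_rad_free R) (Submodule.Quotient.mk 1)
  rwa [← Submodule.Quotient.mk_smul, smul_eq_mul, mul_one, Submodule.Quotient.mk_eq_zero] at hkill

end TorsionTheory

theorem stmt6 (R : Type u) [Ring R] (tt : TorsionTheory R)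
    (K : Ideal R)
    (hK : ∀ r : R, r ∈ K ↔
      ∀ (M : Type u) [AddCommGroup M] [Module R M], tt.free M → ∀ m : M, r • m = 0) :
    tt.rad R = K := by
  exact SetLike.ext fun r => (tt.mem_rad_self_iff r).trans (hK r).symm
end

section
/- Let R be a ring and (T, F) a hereditary torsion pair in Mod(R) with torsion radical t. Suppose t(R) is finitely generated as a left R-module and its left annihilator equals its right annihilator. Then R/Ann(_R t(R)) is a torsion module, i.e. lies in T. -/
/- Left modules mirror the paper's right modules: `t(R)` is finitely generated as a right
module and `A = {r : x * r = 0 for all x ∈ t(R)}`. -/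

universe u

/-! Multiplying by the generators `x i` of `t(R)` embeds `R ⧸ A` into `t(R)ⁿ`: its kernel is
the left annihilator of `t(R)`, which is `A` by hypothesis. A torsion class is closed under
finite products, and a hereditary one under submodules, so `R ⧸ A` is torsion. -/

namespace TorsionTheory

variable {R : Type u} [Ring R] (tt : TorsionTheory R)

theorem range_le_rad {M N : Type u} [AddCommGroup M] [Module R M] [AddCommGroup N]
    [Module R N] (f : N →ₗ[R] M) (hN : tt.torsion N) : LinearMap.range f ≤ tt.rad M := by
  rw [← Submodule.ker_mkQ (tt.rad M), LinearMap.range_le_ker_iff]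
  exact tt.hom_eq_zero _ hN (tt.quotient_rad_free M)

theorem torsion_of_rad_eq_top {M : Type u} [AddCommGroup M] [Module R M]
    (h : tt.rad M = ⊤) : tt.torsion M :=
  tt.torsion_congr ((LinearEquiv.ofEq _ _ h).trans Submodule.topEquiv) (tt.rad_torsion M)

theorem torsion_pi {ι : Type} [Finite ι] {φ : ι → Type u} [∀ i, AddCommGroup (φ i)]
    [∀ i, Module R (φ i)] (h : ∀ i, tt.torsion (φ i)) : tt.torsion (∀ i, φ i) := by
  classical
  refine tt.torsion_of_rad_eq_top (eq_top_iff.2 ?_)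
  rw [← LinearMap.iSup_range_single (R := R) (φ := φ)]
  exact iSup_le fun i => tt.range_le_rad _ (h i)

theorem torsion_of_injective
    (hered : ∀ (M : Type u) [AddCommGroup M] [Module R M] (N : Submodule R M),
      tt.torsion M → tt.torsion N)
    {M N : Type u} [AddCommGroup M] [Module R M] [AddCommGroup N] [Module R N]
    (f : M →ₗ[R] N) (hf : Function.Injective f) (hN : tt.torsion N) : tt.torsion M :=
  tt.torsion_congr (LinearEquiv.ofInjective f hf).symm (hered N (LinearMap.range f) hN)

end TorsionTheory

theorem stmt8 (R : Type u) [Ring R] (tt : TorsionTheory R)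
    (hered : ∀ (M : Type u) [AddCommGroup M] [Module R M] (N : Submodule R M),
      tt.torsion M → tt.torsion N)
    (hfg : ∃ (n : ℕ) (x : Fin n → R), (∀ i, x i ∈ tt.rad R) ∧
      ∀ y ∈ tt.rad R, ∃ c : Fin n → R, y = ∑ i, x i * c i)
    (A : Ideal R)
    (hA : ∀ r : R, r ∈ A ↔ ∀ x ∈ tt.rad R, x * r = 0)
    (hann : ∀ r : R, (∀ x ∈ tt.rad R, x * r = 0) ↔ (∀ x ∈ tt.rad R, r * x = 0)) :
    tt.torsion (R ⧸ A) := by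
  obtain ⟨n, x, hx, hgen⟩ := hfg
  let F : R →ₗ[R] Fin n → tt.rad R :=
    LinearMap.pi fun i => LinearMap.toSpanSingleton R _ ⟨x i, hx i⟩
  have mem_ker_F (r : R) : r ∈ LinearMap.ker F ↔ ∀ i, r * x i = 0 := by
    simp [F, funext_iff, Subtype.ext_iff]
  have hA_eq_ker : A = LinearMap.ker F := by
    ext r
    rw [hA, hann, mem_ker_F]
    refine ⟨fun h i => h _ (hx i), fun h y hy => ?_⟩
    obtain ⟨c, rfl⟩ := hgen y hy
    simp [Finset.mul_sum, ← mul_assoc, h]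
  exact tt.torsion_of_injective hered (A.liftQ F hA_eq_ker.le)
    (LinearMap.ker_eq_bot.1 (Submodule.ker_liftQ_eq_bot' A F hA_eq_ker))
    (tt.torsion_pi fun _ => tt.rad_torsion R)
end

section
/- Let R be a commutative noetherian ring. If (T, F) is a hereditary torsion pair in Mod(R) (that is, T is closed under submodules), then F is closed under direct limits (filtered colimits), i.e. (T, F) is of finite type. -/
/- STATEMENT 17: Over a (commutative) noetherian ring `R`, every hereditary torsion
pair `(T, F)` in `Mod(R)` is of finite type: `F` is closed under direct limits
(filtered colimits along directed systems). -/

universe u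

theorem stmt17 {R : Type u} [CommRing R] [IsNoetherianRing R] (tt : TorsionTheory R)
    (hered : ∀ (M : Type u) [AddCommGroup M] [Module R M] (N : Submodule R M),
      tt.torsion M → tt.torsion N)
    (ι : Type u) [Preorder ι] [IsDirected ι (· ≤ ·)] [DecidableEq ι] [Nonempty ι]
    (G : ι → Type u) [∀ i, AddCommGroup (G i)] [∀ i, Module R (G i)]
    (f : ∀ i j, i ≤ j → G i →ₗ[R] G j) [DirectedSystem G fun i j h => f i j h]
    (hG : ∀ i, tt.free (G i)) :
    tt.free (Module.DirectLimit G f) := by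

  -- Strategy: show `rad L = ⊥`, then `L ≃ L ⧸ rad L`, which is free.
  set L := Module.DirectLimit G f with hL
  have hrad : tt.rad L = ⊥ := by
    rw [eq_bot_iff]
    intro x hx
    -- `x` comes from some component
    obtain ⟨i, g, rfl⟩ := Module.DirectLimit.exists_of (R := R) (f := f) x
    -- annihilator ideals along the system
    set ann : ∀ j, i ≤ j → Ideal R :=
      fun j h => LinearMap.ker (LinearMap.toSpanSingleton R (G j) (f i j h g)) with hann
    have ann_mono : ∀ j k (hij : i ≤ j) (hjk : j ≤ k), ann j hij ≤ ann k (hij.trans hjk) := by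
      intro j k hij hjk r hr
      simp only [hann, LinearMap.mem_ker, LinearMap.toSpanSingleton_apply] at hr ⊢
      rw [← Module.DirectedSystem.map_map (f := f) hij hjk, ← map_smul, hr, map_zero]
    -- pick a maximal annihilator, using noetherianity
    have hns : IsNoetherian R R := inferInstance
    obtain ⟨I0, hI0mem, hI0max⟩ :=
      (set_has_maximal_iff_noetherian (R := R) (M := R)).2 hns
        {I | ∃ j h, I = ann j h} ⟨ann i le_rfl, i, le_rfl, rfl⟩
    obtain ⟨j0, hij0, rfl⟩ := hI0mem
    have ann_le : ∀ j (h : i ≤ j), ann j h ≤ ann j0 hij0 := by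
      intro j h
      obtain ⟨k, hjk, hj0k⟩ := directed_of (· ≤ ·) j j0
      have hk : ann k (hij0.trans hj0k) = ann j0 hij0 :=
        ((ann_mono j0 k hij0 hj0k).lt_or_eq.resolve_left
          (hI0max _ ⟨k, hij0.trans hj0k, rfl⟩)).symm
      have := ann_mono j k h hjk
      rwa [hk] at this
    -- the element in the component `j0`
    set g' := f i j0 hij0 g with hg'
    have hofg : Module.DirectLimit.of R ι G f j0 g' = Module.DirectLimit.of R ι G f i g :=
      Module.DirectLimit.of_f
    -- the cyclic submodule generated by x
    set ψ := LinearMap.toSpanSingleton R L (Module.DirectLimit.of R ι G f i g) with hψ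
    set θ := LinearMap.toSpanSingleton R (G j0) g' with hθ
    have hker : LinearMap.ker ψ ≤ LinearMap.ker θ := by
      intro r hr
      simp only [hψ, LinearMap.mem_ker, LinearMap.toSpanSingleton_apply] at hr
      rw [← hofg, ← map_smul] at hr
      obtain ⟨k, hj0k, hk0⟩ := Module.DirectLimit.of.zero_exact hr
      have hrk : r ∈ ann k (hij0.trans hj0k) := by
        simp only [hann, LinearMap.mem_ker, LinearMap.toSpanSingleton_apply]
        rw [← Module.DirectedSystem.map_map (f := f) hij0 hj0k, ← hg', ← map_smul, hk0]
      have hr0 : r ∈ ann j0 hij0 := ann_le k (hij0.trans hj0k) hrk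
      simpa only [hθ, hann, LinearMap.mem_ker, LinearMap.toSpanSingleton_apply] using hr0
    -- a map from the (torsion) cyclic module range ψ to the (free) module G j0
    set F : ↥(LinearMap.range ψ) →ₗ[R] G j0 :=
      (Submodule.liftQ (LinearMap.ker ψ) θ hker).comp
        (ψ.quotKerEquivRange.symm : ↥(LinearMap.range ψ) →ₗ[R] R ⧸ LinearMap.ker ψ) with hF
    -- range ψ is torsion, since it lies inside rad L
    have hle : LinearMap.range ψ ≤ tt.rad L := by
      rintro y ⟨r, rfl⟩
      exact Submodule.smul_mem _ r hx
    have htor : tt.torsion ↥(LinearMap.range ψ) := by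
      have h1 : tt.torsion ↥((LinearMap.range ψ).comap (tt.rad L).subtype) :=
        hered ↥(tt.rad L) _ (tt.rad_torsion L)
      exact tt.torsion_congr (Submodule.comapSubtypeEquivOfLe hle) h1
    have hF0 : F = 0 := tt.hom_eq_zero F htor (hG j0)
    -- evaluate at the canonical generator
    have hx1 : ψ.quotKerEquivRange (Submodule.Quotient.mk 1) =
        ⟨ψ 1, LinearMap.mem_range_self ψ 1⟩ := by
      rfl
    have hFval : F ⟨ψ 1, LinearMap.mem_range_self ψ 1⟩ = θ 1 := by
      rw [hF, LinearMap.comp_apply, ← hx1, LinearEquiv.coe_coe, LinearEquiv.symm_apply_apply]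
      exact Submodule.liftQ_apply _ θ 1
    have hg'0 : g' = 0 := by
      have := hFval
      rw [hF0] at this
      simpa [hθ, LinearMap.toSpanSingleton_apply] using this.symm
    rw [← hofg, hg'0, map_zero]
    exact Submodule.zero_mem ⊥
  exact tt.free_congr (Submodule.quotEquivOfEqBot (tt.rad L) hrad) (tt.quotient_rad_free L)
end
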